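/- Let K be a positive integer, let δ ∈ (0, 1], and let p, p' : {1, ..., K} → ℝ satisfy δ ≤ p_s ≤ 1 and δ ≤ p'_s ≤ 1 for every s. Define DPR(p) = (min_s p_s) / (max_s p_s). Then |DPR(p) − DPR(p')| ≤ (2/δ²) · max_s |p_s − p'_s|. -/

import Mathlib

/-! A perturbation of size `ε` in sup norm moves both the minimum and the maximum by at most `ε`,
so the numerator of `m / M - m' / M' = (m M' - m' M) / (M M')` is at most `2ε` when all entries
lie in `[0, 1]`, while the denominator is at least `δ²`. -/

namespace Finset

variable {ι α : Type*} [AddCommGroup α] [LinearOrder α] [IsOrderedAddMonoid α]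
  (s : Finset ι) (H : s.Nonempty) (f g : ι → α)

lemma sup'_sub_sup'_le_sup'_abs_sub :
    s.sup' H f - s.sup' H g ≤ s.sup' H (fun i => |f i - g i|) := by
  rw [sub_le_iff_le_add]
  refine sup'_le _ _ fun i hi => ?_
  calc f i ≤ |f i - g i| + g i := sub_le_iff_le_add.1 (le_abs_self _)
    _ ≤ _ := add_le_add (le_sup' (fun i => |f i - g i|) hi) (le_sup' g hi)

lemma inf'_sub_inf'_le_sup'_abs_sub :
    s.inf' H f - s.inf' H g ≤ s.sup' H (fun i => |f i - g i|) := by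
  rw [sub_le_comm]
  refine le_inf' _ _ fun i hi => ?_
  calc s.inf' H f - s.sup' H (fun i => |f i - g i|) ≤ f i - |f i - g i| :=
        sub_le_sub (inf'_le f hi) (le_sup' (fun i => |f i - g i|) hi)
    _ ≤ g i := sub_le_comm.1 (le_abs_self _)

lemma abs_sup'_sub_sup'_le_sup'_abs_sub :
    |s.sup' H f - s.sup' H g| ≤ s.sup' H (fun i => |f i - g i|) :=
  abs_sub_le_iff.2 ⟨sup'_sub_sup'_le_sup'_abs_sub s H f g, by
    simpa only [abs_sub_comm] using sup'_sub_sup'_le_sup'_abs_sub s H g f⟩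

lemma abs_inf'_sub_inf'_le_sup'_abs_sub :
    |s.inf' H f - s.inf' H g| ≤ s.sup' H (fun i => |f i - g i|) :=
  abs_sub_le_iff.2 ⟨inf'_sub_inf'_le_sup'_abs_sub s H f g, by
    simpa only [abs_sub_comm] using inf'_sub_inf'_le_sup'_abs_sub s H g f⟩

end Finset

lemma abs_div_sub_div_le_of_abs_sub_le {δ ε m M m' M' : ℝ} (hδ : 0 < δ)
    (hM : δ ≤ M) (hM' : δ ≤ M') (hm'₀ : 0 ≤ m') (hm'₁ : m' ≤ 1) (hM'₁ : M' ≤ 1)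
    (hm : |m - m'| ≤ ε) (hMM' : |M - M'| ≤ ε) :
    |m / M - m' / M'| ≤ 2 / δ ^ 2 * ε := by
  have hMpos : 0 < M := hδ.trans_le hM
  have hM'pos : 0 < M' := hδ.trans_le hM'
  have hε : 0 ≤ ε := (abs_nonneg _).trans hm
  have numerator : |m * M' - M * m'| ≤ 2 * ε :=
    calc |m * M' - M * m'| = |(m - m') * M' + m' * (M' - M)| := by congr 1; ring
      _ ≤ |m - m'| * M' + m' * |M - M'| := by
        grw [abs_add_le, abs_mul, abs_mul, abs_of_pos hM'pos, abs_of_nonneg hm'₀, abs_sub_comm M']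
      _ ≤ ε * 1 + 1 * ε := by gcongr
      _ = 2 * ε := by ring
  have denominator : δ ^ 2 ≤ M * M' := by rw [sq]; gcongr
  rw [div_sub_div _ _ hMpos.ne' hM'pos.ne', abs_div, abs_of_pos (mul_pos hMpos hM'pos),
    div_le_iff₀ (mul_pos hMpos hM'pos)]
  calc |m * M' - M * m'| ≤ 2 * ε := numerator
    _ = 2 / δ ^ 2 * ε * δ ^ 2 := by field_simp
    _ ≤ 2 / δ ^ 2 * ε * (M * M') := by gcongr

theorem dpr_lipschitz_general
    (K : ℕ) (δ : ℝ) (hδ0 : 0 < δ)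
    (p p' : Fin K → ℝ)
    (hp : ∀ s, δ ≤ p s ∧ p s ≤ 1) (hp' : ∀ s, δ ≤ p' s ∧ p' s ≤ 1)
    (hne : (Finset.univ : Finset (Fin K)).Nonempty) :
    |Finset.univ.inf' hne p / Finset.univ.sup' hne p -
        Finset.univ.inf' hne p' / Finset.univ.sup' hne p'| ≤
      (2 / δ ^ 2) * Finset.univ.sup' hne (fun s => |p s - p' s|) := by
  obtain ⟨s₀, hs₀⟩ := id hne
  have hmin' : δ ≤ Finset.univ.inf' hne p' := Finset.le_inf' _ _ fun s _ => (hp' s).1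
  have hmax'₁ : Finset.univ.sup' hne p' ≤ 1 := Finset.sup'_le _ _ fun s _ => (hp' s).2
  refine abs_div_sub_div_le_of_abs_sub_le hδ0
    ((hp s₀).1.trans (Finset.le_sup' p hs₀)) ((hp' s₀).1.trans (Finset.le_sup' p' hs₀))
    (hδ0.le.trans hmin') ((Finset.inf'_le p' hs₀).trans (hp' s₀).2) hmax'₁
    (Finset.abs_inf'_sub_inf'_le_sup'_abs_sub _ hne p p')
    (Finset.abs_sup'_sub_sup'_le_sup'_abs_sub _ hne p p')

/-- Lipschitz continuity of the demographic parity ratio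
`DPR(p) = (min_s p_s)/(max_s p_s)` on vectors with entries in `[δ, 1]`. -/
theorem dpr_lipschitz
    (K : ℕ) (hK : 0 < K) (δ : ℝ) (hδ0 : 0 < δ) (hδ1 : δ ≤ 1)
    (p p' : Fin K → ℝ)
    (hp : ∀ s, δ ≤ p s ∧ p s ≤ 1) (hp' : ∀ s, δ ≤ p' s ∧ p' s ≤ 1)
    (hne : (Finset.univ : Finset (Fin K)).Nonempty) :
    |Finset.univ.inf' hne p / Finset.univ.sup' hne p -
        Finset.univ.inf' hne p' / Finset.univ.sup' hne p'| ≤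
      (2 / δ ^ 2) * Finset.univ.sup' hne (fun s => |p s - p' s|) :=
  dpr_lipschitz_general K δ hδ0 p p' hp hp' hne
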